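/- For a, b > 0, the function k(x) = F(a, b; a+b; 1 - e^{-x}) is increasing and convex on (0, ∞), and k' maps (0,∞) onto the interval (ab/(a+b), Γ(a+b)/(Γ(a)Γ(b))). -/

import Mathlib

open Real Set

/-- The Gaussian hypergeometric function ₂F₁(a,b;c;x) as a power series sum. -/
noncomputable def hyperF (a b c x : ℝ) : ℝ :=
  ∑' n : ℕ, Polynomial.eval a (ascPochhammer ℝ n) * Polynomial.eval b (ascPochhammer ℝ n) /
      (Polynomial.eval c (ascPochhammer ℝ n) * (n.factorial : ℝ)) * x ^ n

/-!
Write `F(t) = ∑ cₙ tⁿ` for `F(a, b; a + b; t)` and `t = 1 - e^{-x}`. Since `dt/dx = 1 - t`, the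
chain rule gives `k'(x) = (1 - t) F'(t) = ∑ eₙ tⁿ` with `eₙ = (n + 1) cₙ₊₁ - n cₙ`, and the
term ratio `cₙ₊₁ / cₙ = (a + n)(b + n) / ((a + b + n)(n + 1))` turns this into
`eₙ = ab cₙ / (a + b + n) > 0`. The partial
sums `∑_{n<N} eₙ = N c_N` tend to `Γ(a + b) / (Γ(a) Γ(b))` by Euler's limit formula for `Γ`. So `k'`
is the composite of the increasing bijection `(0, ∞) → (0, 1)`, `x ↦ t`, with a power series with
positive coefficients, continuous and strictly increasing on `[0, 1]`, which maps `(0, 1)` onto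
`(e₀, ∑ eₙ)`. A positive, strictly increasing derivative makes `k` strictly increasing and convex.
-/

open Filter Topology Polynomial

theorem summable_natCast_mul_pow_pred {r : ℝ} (hr : |r| < 1) :
    Summable fun n : ℕ => (n : ℝ) * r ^ (n - 1) := by
  rw [← summable_nat_add_iff 1]
  refine ((summable_pow_mul_geometric_of_norm_lt_one 1 hr).add
    (summable_geometric_of_norm_lt_one hr)).congr fun n => ?_
  simp only [Nat.add_sub_cancel, Nat.cast_succ, pow_one]
  ring

theorem hasDerivAt_tsum_mul_pow {c : ℕ → ℝ} {C : ℝ} (hc : ∀ n, |c n| ≤ C) {t : ℝ}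
    (ht : |t| < 1) :
    HasDerivAt (fun x => ∑' n, c n * x ^ n) (∑' n, (n + 1) * c (n + 1) * t ^ n) t := by
  obtain ⟨r, htr, hr⟩ := exists_between ht
  have hr₀ : 0 < r := (abs_nonneg t).trans_lt htr
  have hbound : ∀ n, ∀ y ∈ Ioo (-r) r, ‖c n * (n * y ^ (n - 1))‖ ≤ C * (n * r ^ (n - 1)) := by
    intro n y hy
    simp only [norm_mul, norm_pow, Real.norm_eq_abs, Nat.abs_cast]
    have hy' : |y| ≤ r := abs_le.2 ⟨hy.1.le, hy.2.le⟩
    have hC : 0 ≤ C := (abs_nonneg _).trans (hc 0)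
    gcongr
    exact hc n
  have ht' : t ∈ Ioo (-r) r := abs_lt.1 htr
  have hu := (summable_natCast_mul_pow_pred (by rwa [abs_of_pos hr₀])).mul_left C
  have hderiv := hasDerivAt_tsum_of_isPreconnected hu isOpen_Ioo isPreconnected_Ioo
    (fun n y _ => (hasDerivAt_pow n y).const_mul (c n)) hbound (y₀ := 0) ⟨neg_lt_zero.2 hr₀, hr₀⟩
    (summable_of_ne_finset_zero (s := {0}) fun n hn => by simp_all) ht'
  rw [(Summable.of_norm_bounded hu (hbound · t ht')).tsum_eq_zero_add] at hderiv
  refine hderiv.congr_deriv ?_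
  simp only [CharP.cast_eq_zero, zero_mul, mul_zero, zero_add, Nat.add_sub_cancel, Nat.cast_succ]
  exact tsum_congr fun n => by ring

theorem one_sub_mul_tsum_succ_mul_pow {d : ℕ → ℝ} {t : ℝ}
    (hd : Summable fun n => d (n + 1) * t ^ n) :
    (1 - t) * ∑' n, d (n + 1) * t ^ n = d 0 + ∑' n, (d (n + 1) - d n) * t ^ n := by
  have hd' : Summable fun n => d n * t ^ n := by
    rw [← summable_nat_add_iff 1]
    exact (hd.mul_right t).congr fun n => by ring
  have hshift : ∑' n, d n * t ^ n = d 0 + t * ∑' n, d (n + 1) * t ^ n := by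
    rw [hd'.tsum_eq_zero_add, ← tsum_mul_left]
    simp only [pow_zero, mul_one]
    congr 1
    exact tsum_congr fun n => by ring
  simp only [sub_mul]
  rw [hd.tsum_sub hd', hshift]
  ring

theorem continuousOn_tsum_mul_pow {e : ℕ → ℝ} (he : Summable fun n => ‖e n‖) :
    ContinuousOn (fun t => ∑' n, e n * t ^ n) (Icc (-1) 1) := by
  refine continuousOn_tsum (fun n => (continuous_const.mul (continuous_pow n)).continuousOn) he
    fun n t ht => ?_
  rw [norm_mul, norm_pow]
  exact mul_le_of_le_one_right (norm_nonneg _) (pow_le_one₀ (norm_nonneg t) (abs_le.2 ht))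

theorem strictMonoOn_tsum_mul_pow {e : ℕ → ℝ} (he : ∀ n, 0 ≤ e n) (hsum : Summable e) {i : ℕ}
    (hi : i ≠ 0) (hei : 0 < e i) :
    StrictMonoOn (fun t => ∑' n, e n * t ^ n) (Icc 0 1) := by
  intro s hs t ht hst
  refine Summable.tsum_lt_tsum_of_nonneg (i := i) (fun n => mul_nonneg (he n) (pow_nonneg hs.1 n))
    (fun n => mul_le_mul_of_nonneg_left (pow_le_pow_left₀ hs.1 hst.le n) (he n))
    (mul_lt_mul_of_pos_left (pow_lt_pow_left₀ hst hs.1 hi) hei) ?_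
  exact hsum.of_nonneg_of_le (fun n => mul_nonneg (he n) (pow_nonneg ht.1 n))
    fun n => mul_le_of_le_one_right (he n) (pow_le_one₀ ht.1 ht.2)

theorem strictMono_one_sub_exp_neg : StrictMono fun x : ℝ => 1 - exp (-x) :=
  fun x y h => by simpa using h

theorem mapsTo_one_sub_exp_neg_Ioi : MapsTo (fun x : ℝ => 1 - exp (-x)) (Ioi 0) (Ioo 0 1) :=
  fun x hx => ⟨by simpa using hx, by simpa using exp_pos (-x)⟩

theorem image_one_sub_exp_neg_Ioi : (fun x : ℝ => 1 - exp (-x)) '' Ioi 0 = Ioo 0 1 := by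
  refine mapsTo_one_sub_exp_neg_Ioi.image_subset.antisymm fun y ⟨hy₀, hy₁⟩ => ?_
  refine ⟨-log (1 - y), neg_pos.2 (log_neg (by linarith) (by linarith)), ?_⟩
  simp [exp_log (sub_pos.2 hy₁)]

theorem ascPochhammer_eval_eq_prod_range {S : Type*} [CommSemiring S] (x : S) (n : ℕ) :
    (ascPochhammer S n).eval x = ∏ j ∈ Finset.range n, (x + j) := by
  induction n with
  | zero => simp
  | succ n ih => rw [ascPochhammer_succ_eval, ih, Finset.prod_range_succ]

theorem Real.GammaSeq_eq_div_ascPochhammer (s : ℝ) (n : ℕ) :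
    GammaSeq s n = n ^ s * n.factorial / (ascPochhammer ℝ (n + 1)).eval s := by
  rw [GammaSeq, ascPochhammer_eval_eq_prod_range]

noncomputable def hyperCoeff (a b c : ℝ) (n : ℕ) : ℝ :=
  (ascPochhammer ℝ n).eval a * (ascPochhammer ℝ n).eval b /
    ((ascPochhammer ℝ n).eval c * n.factorial)

theorem hyperF_eq_tsum (a b c x : ℝ) : hyperF a b c x = ∑' n, hyperCoeff a b c n * x ^ n := rfl

theorem hyperCoeff_zero (a b c : ℝ) : hyperCoeff a b c 0 = 1 := by simp [hyperCoeff]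

theorem hyperCoeff_pos {a b c : ℝ} (ha : 0 < a) (hb : 0 < b) (hc : 0 < c) (n : ℕ) :
    0 < hyperCoeff a b c n := by
  have := ascPochhammer_pos n a ha
  have := ascPochhammer_pos n b hb
  have := ascPochhammer_pos n c hc
  unfold hyperCoeff
  positivity

theorem succ_mul_hyperCoeff_succ (a b : ℝ) {c : ℝ} (hc : 0 < c) (n : ℕ) :
    (n + 1) * hyperCoeff a b c (n + 1) = hyperCoeff a b c n * ((a + n) * (b + n) / (c + n)) := by
  have := ascPochhammer_pos n c hc
  have : 0 < c + n := by positivity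
  unfold hyperCoeff
  rw [ascPochhammer_succ_eval, ascPochhammer_succ_eval, ascPochhammer_succ_eval,
    Nat.factorial_succ]
  push_cast
  field_simp

theorem succ_mul_hyperCoeff_succ_eq_GammaSeq {a b : ℝ} (ha : 0 < a) (hb : 0 < b) {n : ℕ}
    (hn : n ≠ 0) :
    (n + 1) * hyperCoeff a b (a + b) (n + 1) =
      GammaSeq (a + b) n / (GammaSeq a n * GammaSeq b n) := by
  have hn₀ : (0 : ℝ) < n := by positivity
  have := ascPochhammer_pos (n + 1) a ha
  have := ascPochhammer_pos (n + 1) b hb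
  have := ascPochhammer_pos (n + 1) (a + b) (by positivity)
  have := rpow_pos_of_pos hn₀ a
  have := rpow_pos_of_pos hn₀ b
  rw [hyperCoeff, GammaSeq_eq_div_ascPochhammer, GammaSeq_eq_div_ascPochhammer,
    GammaSeq_eq_div_ascPochhammer, Nat.factorial_succ, rpow_add hn₀]
  push_cast
  field_simp

theorem tendsto_natCast_mul_hyperCoeff {a b : ℝ} (ha : 0 < a) (hb : 0 < b) :
    Tendsto (fun n : ℕ => n * hyperCoeff a b (a + b) n) atTop
      (𝓝 (Gamma (a + b) / (Gamma a * Gamma b))) := by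
  have hΓ : Gamma a * Gamma b ≠ 0 := (mul_pos (Gamma_pos_of_pos ha) (Gamma_pos_of_pos hb)).ne'
  rw [← tendsto_add_atTop_iff_nat 1]
  refine ((GammaSeq_tendsto_Gamma (a + b)).div
    ((GammaSeq_tendsto_Gamma a).mul (GammaSeq_tendsto_Gamma b)) hΓ).congr' ?_
  filter_upwards [eventually_ne_atTop 0] with n hn
  rw [Pi.div_apply, ← succ_mul_hyperCoeff_succ_eq_GammaSeq ha hb hn, Nat.cast_succ]

-- The Taylor coefficients of `(1 - t) F'(t)`; the cast `((n + 1 : ℕ) : ℝ)` makes them telescope.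
noncomputable def hyperDerivCoeff (a b : ℝ) (n : ℕ) : ℝ :=
  ((n + 1 : ℕ) : ℝ) * hyperCoeff a b (a + b) (n + 1) - n * hyperCoeff a b (a + b) n

theorem sum_range_hyperDerivCoeff (a b : ℝ) (N : ℕ) :
    ∑ n ∈ Finset.range N, hyperDerivCoeff a b n = N * hyperCoeff a b (a + b) N :=
  (Finset.sum_range_sub (fun n => (n : ℝ) * hyperCoeff a b (a + b) n) N).trans (by simp)

section HyperDerivCoeff

variable {a b : ℝ} (ha : 0 < a) (hb : 0 < b)
include ha hb

theorem hyperDerivCoeff_eq (n : ℕ) :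
    hyperDerivCoeff a b n = a * b * hyperCoeff a b (a + b) n / (a + b + n) := by
  have : 0 < a + b + n := by positivity
  rw [hyperDerivCoeff, Nat.cast_succ, succ_mul_hyperCoeff_succ a b (by positivity)]
  field_simp
  ring

theorem hyperDerivCoeff_pos (n : ℕ) : 0 < hyperDerivCoeff a b n := by
  have := hyperCoeff_pos ha hb (add_pos ha hb) n
  rw [hyperDerivCoeff_eq ha hb]
  positivity

theorem hyperDerivCoeff_zero : hyperDerivCoeff a b 0 = a * b / (a + b) := by
  simp [hyperDerivCoeff_eq ha hb, hyperCoeff_zero]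

theorem hasSum_hyperDerivCoeff :
    HasSum (hyperDerivCoeff a b) (Gamma (a + b) / (Gamma a * Gamma b)) := by
  refine (hasSum_iff_tendsto_nat_of_nonneg (fun n => (hyperDerivCoeff_pos ha hb n).le) _).2 ?_
  simpa only [sum_range_hyperDerivCoeff] using tendsto_natCast_mul_hyperCoeff ha hb

theorem natCast_mul_hyperCoeff_le (n : ℕ) :
    n * hyperCoeff a b (a + b) n ≤ Gamma (a + b) / (Gamma a * Gamma b) := by
  rw [← sum_range_hyperDerivCoeff]
  exact sum_le_hasSum _ (fun i _ => (hyperDerivCoeff_pos ha hb i).le)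
    (hasSum_hyperDerivCoeff ha hb)

theorem abs_hyperCoeff_le (n : ℕ) :
    |hyperCoeff a b (a + b) n| ≤ 1 + Gamma (a + b) / (Gamma a * Gamma b) := by
  have hL := (hasSum_hyperDerivCoeff ha hb).nonneg fun n => (hyperDerivCoeff_pos ha hb n).le
  rw [abs_of_pos (hyperCoeff_pos ha hb (add_pos ha hb) n)]
  rcases n with _ | n
  · simpa [hyperCoeff_zero] using hL
  · calc hyperCoeff a b (a + b) (n + 1)
        ≤ (n + 1 : ℕ) * hyperCoeff a b (a + b) (n + 1) :=
          le_mul_of_one_le_left (hyperCoeff_pos ha hb (add_pos ha hb) _).le (by simp)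
      _ ≤ _ := natCast_mul_hyperCoeff_le ha hb (n + 1)
      _ ≤ _ := le_add_of_nonneg_left zero_le_one

theorem one_sub_mul_tsum_succ_mul_hyperCoeff {t : ℝ} (ht : |t| < 1) :
    (1 - t) * ∑' n, (n + 1) * hyperCoeff a b (a + b) (n + 1) * t ^ n =
      ∑' n, hyperDerivCoeff a b n * t ^ n := by
  have hsum : Summable fun n => ((n + 1 : ℕ) : ℝ) * hyperCoeff a b (a + b) (n + 1) * t ^ n := by
    refine .of_norm_bounded ((summable_geometric_of_lt_one (abs_nonneg t) ht).mul_left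
      (Gamma (a + b) / (Gamma a * Gamma b))) fun n => ?_
    rw [norm_mul, norm_pow, Real.norm_eq_abs, Real.norm_eq_abs,
      abs_of_pos (mul_pos (by positivity) (hyperCoeff_pos ha hb (add_pos ha hb) (n + 1)))]
    exact mul_le_mul_of_nonneg_right (natCast_mul_hyperCoeff_le ha hb (n + 1)) (by positivity)
  have := one_sub_mul_tsum_succ_mul_pow (d := fun n => n * hyperCoeff a b (a + b) n) hsum
  simpa only [hyperDerivCoeff, Nat.cast_succ, CharP.cast_eq_zero, zero_mul, zero_add] using this

theorem hasDerivAt_hyperF_one_sub_exp_neg {x : ℝ} (hx : 0 < x) :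
    HasDerivAt (fun x => hyperF a b (a + b) (1 - exp (-x)))
      (∑' n, hyperDerivCoeff a b n * (1 - exp (-x)) ^ n) x := by
  obtain ⟨ht₀, ht₁⟩ := mapsTo_one_sub_exp_neg_Ioi hx
  have ht : |1 - exp (-x)| < 1 := abs_lt.2 ⟨by linarith, ht₁⟩
  have hσ : HasDerivAt (fun x => 1 - exp (-x)) (exp (-x)) x := by
    simpa using (hasDerivAt_neg x).exp.const_sub 1
  refine ((hasDerivAt_tsum_mul_pow (abs_hyperCoeff_le ha hb) ht).comp x hσ).congr_deriv ?_
  rw [← one_sub_mul_tsum_succ_mul_hyperCoeff ha hb ht]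
  ring

theorem strictMonoOn_tsum_hyperDerivCoeff_mul_pow :
    StrictMonoOn (fun t => ∑' n, hyperDerivCoeff a b n * t ^ n) (Icc 0 1) :=
  strictMonoOn_tsum_mul_pow (fun n => (hyperDerivCoeff_pos ha hb n).le)
    (hasSum_hyperDerivCoeff ha hb).summable one_ne_zero (hyperDerivCoeff_pos ha hb 1)

theorem image_tsum_hyperDerivCoeff_mul_pow_Ioo :
    (fun t => ∑' n, hyperDerivCoeff a b n * t ^ n) '' Ioo 0 1 =
      Ioo (a * b / (a + b)) (Gamma (a + b) / (Gamma a * Gamma b)) := by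
  have hsum := hasSum_hyperDerivCoeff ha hb
  have hcont := continuousOn_tsum_mul_pow (by simpa only [Real.norm_eq_abs] using hsum.summable.abs)
  rw [(hcont.mono (Icc_subset_Icc_left (by norm_num))).image_Ioo_of_strictMonoOn zero_le_one
    (strictMonoOn_tsum_hyperDerivCoeff_mul_pow ha hb), tsum_eq_single 0 fun n hn => by simp [hn]]
  simp [hyperDerivCoeff_zero ha hb, hsum.tsum_eq]

end HyperDerivCoeff

theorem hyperF_exp_convex (a b : ℝ) (ha : 0 < a) (hb : 0 < b) :
    StrictMonoOn (fun x : ℝ => hyperF a b (a + b) (1 - Real.exp (-x))) (Set.Ioi 0) ∧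
    ConvexOn ℝ (Set.Ioi 0) (fun x : ℝ => hyperF a b (a + b) (1 - Real.exp (-x))) ∧
    (deriv fun x : ℝ => hyperF a b (a + b) (1 - Real.exp (-x))) '' Set.Ioi 0 =
      Set.Ioo (a * b / (a + b)) (Real.Gamma (a + b) / (Real.Gamma a * Real.Gamma b)) := by
  set k := fun x : ℝ => hyperF a b (a + b) (1 - exp (-x))
  set g := fun t : ℝ => ∑' n, hyperDerivCoeff a b n * t ^ n
  have hk : ∀ x ∈ Ioi (0 : ℝ), HasDerivAt k (g (1 - exp (-x))) x :=
    fun x hx => hasDerivAt_hyperF_one_sub_exp_neg ha hb hx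
  have hk' : EqOn (deriv k) (g ∘ fun x => 1 - exp (-x)) (Ioi 0) := fun x hx => (hk x hx).deriv
  have hcont : ContinuousOn k (Ioi 0) := fun x hx => (hk x hx).continuousAt.continuousWithinAt
  have himage : deriv k '' Ioi 0 = Ioo (a * b / (a + b)) (Gamma (a + b) / (Gamma a * Gamma b)) := by
    rw [hk'.image_eq, image_comp, image_one_sub_exp_neg_Ioi,
      image_tsum_hyperDerivCoeff_mul_pow_Ioo ha hb]
  have hk'_mono : StrictMonoOn (deriv k) (interior (Ioi 0)) := by
    rw [interior_Ioi]
    exact ((strictMonoOn_tsum_hyperDerivCoeff_mul_pow ha hb).comp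
      (strictMono_one_sub_exp_neg.strictMonoOn _)
      (mapsTo_one_sub_exp_neg_Ioi.mono_right Ioo_subset_Icc_self)).congr hk'.symm
  refine ⟨strictMonoOn_of_deriv_pos (convex_Ioi 0) hcont fun x hx => ?_,
    (hk'_mono.strictConvexOn_of_deriv (convex_Ioi 0) hcont).convexOn, himage⟩
  rw [interior_Ioi] at hx
  exact (by positivity : 0 < a * b / (a + b)).trans (himage ▸ mem_image_of_mem (deriv k) hx).1
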